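/- Let 0 < μ ≤ 1, ζ > 0, ϑ ≥ μζ, 0 < θ ≤ 1, λ > 0, t > 0, let G ∈ [0,1] and let k ≥ 1 be an integer. Denote by P_η(n,t) the FCP probability function with rate parameter η. Then the binomial-thinning identity underlying the order-statistics theorem holds: ∑_{n=k}^∞ ( ∑_{j=k}^{n} C(n,j) G^j (1−G)^{n−j} ) · P_λ(n,t) = ∑_{j=k}^∞ P_{λG}(j,t) = ∑_{j=k}^∞ Γ(ϑ) (ζ)_j (λ G t^θ)^j / j! · E_{μ,ϑ+μj}^{ζ+j}(−λ G t^θ), all series converging absolutely. -/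

import Mathlib

/-!
With `x = λ t^θ` and `c_m = (ζ)_m / (m! Γ(μ m + ϑ))`, expanding the Mittag-Leffler factor and using
`(ζ)_n (ζ + n)_k = (ζ)_{n+k}` gives `P_λ(n, t) = Γ(ϑ) ∑_{m ≥ n} c_m C(m, n) x^n (-x)^{m-n}`.
Log-convexity of `Γ` gives `Γ(s) / Γ(s + μ) → 0`, so `c_m` decays faster than any geometric
sequence and the double series converges absolutely against any exponentially bounded weights
`a_n`. Resumming along `m = n + k` turns `∑_n a_n P_λ(n, t)` into
`Γ(ϑ) ∑_m c_m ∑_n a_n C(m, n) x^n (-x)^{m-n}`. For the binomial tail weights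
`a_n = ∑_{j ≥ k} C(n, j) G^j (1 - G)^{n-j}` the inner sum collapses, via
`C(m, n) C(n, j) = C(m, j) C(m - j, n - j)` and `((1 - G) x - x)^{m-j} = (-G x)^{m-j}`, to
`∑_{j ≥ k} C(m, j) (G x)^j (-G x)^{m-j}`, which is the inner sum for the weights `1_{j ≥ k}` at
rate `λ G`.
-/

open Real

/-- Rising factorial (Pochhammer symbol) `(ζ)_n = Γ(ζ+n)/Γ(ζ)`. -/
noncomputable def risingFactorial (ζ : ℝ) (n : ℕ) : ℝ :=
  Real.Gamma (ζ + n) / Real.Gamma ζ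

/-- Three-parameter (Prabhakar) Mittag-Leffler function. -/
noncomputable def mittagLeffler (μ ϑ ζ z : ℝ) : ℝ :=
  ∑' m : ℕ, risingFactorial ζ m * z ^ m / (m.factorial * Real.Gamma (μ * m + ϑ))

/-- Probability function of the fractional counting process with rate `lam`. -/
noncomputable def fcpP (μ ϑ ζ θ lam : ℝ) (n : ℕ) (t : ℝ) : ℝ :=
  risingFactorial ζ n * Real.Gamma ϑ * (lam * t ^ θ) ^ n / n.factorial *
    ∑' k : ℕ, risingFactorial (ζ + n) k * (-(lam * t ^ θ)) ^ k /
      (k.factorial * Real.Gamma (μ * (n + k : ℕ) + ϑ))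

open Filter Topology Finset

section RisingFactorial

variable {ζ : ℝ}

lemma risingFactorial_pos (hζ : 0 < ζ) (m : ℕ) : 0 < risingFactorial ζ m :=
  div_pos (Gamma_pos_of_pos (by positivity)) (Gamma_pos_of_pos hζ)

lemma risingFactorial_succ (hζ : 0 < ζ) (m : ℕ) :
    risingFactorial ζ (m + 1) = (ζ + m) * risingFactorial ζ m := by
  rw [risingFactorial, risingFactorial, Nat.cast_succ, ← add_assoc,
    Gamma_add_one (by positivity), mul_div_assoc]

lemma risingFactorial_mul_risingFactorial_add (hζ : 0 < ζ) (n k : ℕ) :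
    risingFactorial ζ n * risingFactorial (ζ + n) k = risingFactorial ζ (n + k) := by
  have hΓ : Gamma (ζ + n) ≠ 0 := (Gamma_pos_of_pos (by positivity)).ne'
  rw [risingFactorial, risingFactorial, risingFactorial, Nat.cast_add, ← add_assoc,
    div_mul_div_comm, mul_comm (Gamma ζ), mul_div_mul_left _ _ hΓ]

end RisingFactorial

lemma Real.Gamma_add_one_le_Gamma_add_mul_rpow {μ s : ℝ} (hμ : 0 < μ) (hμ1 : μ ≤ 1)
    (hs : 0 < s) : Gamma (s + 1) ≤ Gamma (s + μ) * (s + μ) ^ (1 - μ) := by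
  rcases hμ1.lt_or_eq with hμ1 | rfl
  · have hsμ : 0 < s + μ := by linarith
    have hΓ : 0 < Gamma (s + μ) := Gamma_pos_of_pos hsμ
    -- `s + 1` is the convex combination `μ (s + μ) + (1 - μ) (s + μ + 1)`
    have key := Gamma_mul_add_mul_le_rpow_Gamma_mul_rpow_Gamma hsμ (by linarith : 0 < s + μ + 1)
      hμ (sub_pos.2 hμ1) (add_sub_cancel μ 1)
    rw [Gamma_add_one hsμ.ne', mul_rpow hsμ.le hΓ.le, ← mul_assoc, mul_comm _ ((s + μ) ^ _),
      mul_assoc, ← rpow_add hΓ, add_sub_cancel, rpow_one] at key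
    convert key.trans_eq (mul_comm _ _) using 2
    ring
  · simp

lemma Real.tendsto_Gamma_div_Gamma_add_atTop {μ : ℝ} (hμ : 0 < μ) (hμ1 : μ ≤ 1) :
    Tendsto (fun s => Gamma s / Gamma (s + μ)) atTop (𝓝 0) := by
  have hlim : Tendsto (fun s => 2 * (s + μ) ^ (-μ)) atTop (𝓝 0) := by
    simpa using ((tendsto_rpow_neg_atTop hμ).comp
      (tendsto_atTop_add_const_right _ μ tendsto_id)).const_mul 2
  refine squeeze_zero' ?_ ?_ hlim
  · filter_upwards [eventually_gt_atTop 0] with s hs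
    exact div_nonneg (Gamma_pos_of_pos hs).le (Gamma_pos_of_pos (by linarith)).le
  · filter_upwards [eventually_ge_atTop μ] with s hs
    have hs0 : 0 < s := hμ.trans_le hs
    have hsμ : 0 < s + μ := by linarith
    have hbound := Gamma_add_one_le_Gamma_add_mul_rpow hμ hμ1 hs0
    rw [Gamma_add_one hs0.ne', sub_eq_neg_add, rpow_add_one hsμ.ne'] at hbound
    rw [div_le_iff₀ (Gamma_pos_of_pos hsμ)]
    have : 0 ≤ Gamma s := (Gamma_pos_of_pos hs0).le
    have : 0 < (s + μ) ^ (-μ) := rpow_pos_of_pos hsμ _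
    nlinarith

noncomputable def mittagLefflerCoeff (μ ϑ ζ : ℝ) (m : ℕ) : ℝ :=
  risingFactorial ζ m / (m.factorial * Gamma (μ * m + ϑ))

section MittagLefflerCoeff

variable {μ ϑ ζ : ℝ}

lemma mittagLefflerCoeff_pos (hμ : 0 ≤ μ) (hϑ : 0 < ϑ) (hζ : 0 < ζ) (m : ℕ) :
    0 < mittagLefflerCoeff μ ϑ ζ m :=
  div_pos (risingFactorial_pos hζ m) (mul_pos (by positivity) (Gamma_pos_of_pos (by positivity)))

lemma mittagLefflerCoeff_succ (hμ : 0 ≤ μ) (hϑ : 0 < ϑ) (hζ : 0 < ζ) (m : ℕ) :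
    mittagLefflerCoeff μ ϑ ζ (m + 1) = mittagLefflerCoeff μ ϑ ζ m *
      ((ζ + m) / (m + 1) * (Gamma (μ * m + ϑ) / Gamma (μ * m + ϑ + μ))) := by
  have hΓ : Gamma (μ * m + ϑ) ≠ 0 := (Gamma_pos_of_pos (by positivity)).ne'
  rw [mittagLefflerCoeff, mittagLefflerCoeff, risingFactorial_succ hζ, Nat.factorial_succ]
  push_cast
  rw [show μ * (m + 1) + ϑ = μ * m + ϑ + μ by ring]
  field_simp

lemma summable_mittagLefflerCoeff_mul_pow (hμ : 0 < μ) (hμ1 : μ ≤ 1) (hϑ : 0 < ϑ) (hζ : 0 < ζ)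
    (r : ℝ) : Summable fun m => mittagLefflerCoeff μ ϑ ζ m * r ^ m := by
  set ρ : ℕ → ℝ := fun m => (ζ + m) / (m + 1) * (Gamma (μ * m + ϑ) / Gamma (μ * m + ϑ + μ))
  have hρ : ∀ᶠ m in atTop, ‖r * ρ m‖ ≤ 1 / 2 := by
    have hs : Tendsto (fun m : ℕ => μ * m + ϑ) atTop atTop :=
      tendsto_atTop_add_const_right _ ϑ (tendsto_natCast_atTop_atTop.const_mul_atTop hμ)
    have hlim := ((tendsto_Gamma_div_Gamma_add_atTop hμ hμ1).comp hs).const_mul (|r| * (ζ + 1))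
    rw [mul_zero] at hlim
    filter_upwards [hlim.eventually (ge_mem_nhds one_half_pos)] with m hm
    have hfrac : 0 ≤ (ζ + m) / (m + 1) ∧ (ζ + m) / (m + 1) ≤ ζ + 1 := by
      constructor
      · positivity
      · rw [div_le_iff₀ (by positivity)]; nlinarith [(Nat.cast_nonneg m : (0 : ℝ) ≤ m)]
    have hΓ : 0 ≤ Gamma (μ * m + ϑ) / Gamma (μ * m + ϑ + μ) :=
      div_nonneg (Gamma_pos_of_pos (by positivity)).le (Gamma_pos_of_pos (by positivity)).le
    calc ‖r * ρ m‖ = |r| * ((ζ + m) / (m + 1) * (Gamma (μ * m + ϑ) / Gamma (μ * m + ϑ + μ))) := by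
          rw [norm_mul, Real.norm_eq_abs, Real.norm_eq_abs, abs_of_nonneg (mul_nonneg hfrac.1 hΓ)]
      _ ≤ |r| * (ζ + 1) * (Gamma (μ * m + ϑ) / Gamma (μ * m + ϑ + μ)) := by
          rw [mul_assoc]; gcongr; exact hfrac.2
      _ ≤ 1 / 2 := hm
  refine summable_of_ratio_norm_eventually_le one_half_lt_one ?_
  filter_upwards [hρ] with m hm
  have hstep : mittagLefflerCoeff μ ϑ ζ (m + 1) * r ^ (m + 1) =
      r * ρ m * (mittagLefflerCoeff μ ϑ ζ m * r ^ m) := by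
    rw [mittagLefflerCoeff_succ hμ.le hϑ hζ, pow_succ]; ring
  rw [hstep, norm_mul]
  exact mul_le_mul_of_nonneg_right hm (norm_nonneg _)

end MittagLefflerCoeff

lemma summable_of_nonneg_of_summable_sum_antidiagonal {f : ℕ × ℕ → ℝ} (hf : 0 ≤ f)
    (h : Summable fun m => ∑ p ∈ antidiagonal m, f p) : Summable f := by
  rw [← HasAntidiagonal.sigmaAntidiagonalEquivProd.summable_iff]
  refine (summable_sigma_of_nonneg fun _ => hf _).2 ⟨fun _ => Summable.of_finite, ?_⟩
  simpa only [Function.comp_apply, HasAntidiagonal.sigmaAntidiagonalEquivProd_apply,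
    Finset.tsum_subtype] using h

lemma Summable.tsum_eq_tsum_sum_antidiagonal {α : Type*} [NormedAddCommGroup α] [CompleteSpace α]
    {f : ℕ × ℕ → α} (hf : Summable f) : ∑' p, f p = ∑' m, ∑ p ∈ antidiagonal m, f p := by
  rw [← HasAntidiagonal.sigmaAntidiagonalEquivProd.tsum_eq]
  exact (HasAntidiagonal.sigmaAntidiagonalEquivProd.summable_iff.2 hf).tsum_sigma.trans
    (tsum_congr fun m => Finset.tsum_subtype _ f)

section FCP

variable {μ ϑ ζ : ℝ}

lemma summable_mittagLefflerCoeff_mul_choose_mul_pow (hμ : 0 < μ) (hμ1 : μ ≤ 1) (hϑ : 0 < ϑ)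
    (hζ : 0 < ζ) {a b : ℝ} (ha : 0 ≤ a) (hb : 0 ≤ b) :
    Summable fun p : ℕ × ℕ =>
      mittagLefflerCoeff μ ϑ ζ (p.1 + p.2) * (p.1 + p.2).choose p.1 * a ^ p.1 * b ^ p.2 := by
  refine summable_of_nonneg_of_summable_sum_antidiagonal
    (fun p => by have := mittagLefflerCoeff_pos hμ.le hϑ hζ (p.1 + p.2); positivity) ?_
  refine (summable_mittagLefflerCoeff_mul_pow hμ hμ1 hϑ hζ (a + b)).congr fun m => ?_
  rw [Nat.sum_antidiagonal_eq_sum_range_succ_mk, add_pow, mul_sum]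
  refine sum_congr rfl fun n hn => ?_
  rw [Nat.add_sub_cancel' (mem_range_succ_iff.1 hn)]
  ring

noncomputable def fcpTerm (μ ϑ ζ x : ℝ) (n k : ℕ) : ℝ :=
  Gamma ϑ * mittagLefflerCoeff μ ϑ ζ (n + k) * (n + k).choose n * x ^ n * (-x) ^ k

lemma fcpP_eq_tsum_fcpTerm (hζ : 0 < ζ) (θ lam t : ℝ) (n : ℕ) :
    fcpP μ ϑ ζ θ lam n t = ∑' k, fcpTerm μ ϑ ζ (lam * t ^ θ) n k := by
  rw [fcpP, ← tsum_mul_left]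
  refine tsum_congr fun k => ?_
  have hfact : ((n + k).factorial : ℝ) = (n + k).choose n * n.factorial * k.factorial := by
    have := Nat.choose_mul_factorial_mul_factorial (Nat.le_add_right n k)
    rw [Nat.add_sub_cancel_left] at this
    exact_mod_cast this.symm
  have hC : ((n + k).choose n : ℝ) ≠ 0 := by
    exact_mod_cast (Nat.choose_pos (Nat.le_add_right n k)).ne'
  rw [fcpTerm, mittagLefflerCoeff, ← risingFactorial_mul_risingFactorial_add hζ, hfact]
  field_simp

lemma summable_mul_fcpTerm (hμ : 0 < μ) (hμ1 : μ ≤ 1) (hϑ : 0 < ϑ) (hζ : 0 < ζ) {a : ℕ → ℝ}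
    {R : ℝ} (ha : ∀ n, |a n| ≤ R ^ n) (x : ℝ) :
    Summable fun p : ℕ × ℕ => a p.1 * fcpTerm μ ϑ ζ x p.1 p.2 := by
  have hR : 0 ≤ R := (abs_nonneg _).trans (by simpa using ha 1)
  refine Summable.of_norm_bounded ((summable_mittagLefflerCoeff_mul_choose_mul_pow hμ hμ1 hϑ hζ
    (mul_nonneg hR (abs_nonneg x)) (abs_nonneg x)).mul_left (Gamma ϑ)) fun ⟨n, k⟩ => ?_
  have hΓ := Gamma_pos_of_pos hϑ
  have hD := mittagLefflerCoeff_pos hμ.le hϑ hζ (n + k)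
  simp only [fcpTerm, Real.norm_eq_abs, abs_mul, abs_pow, abs_neg, Nat.abs_cast, abs_of_pos hΓ,
    abs_of_pos hD, mul_pow]
  set c := Gamma ϑ * mittagLefflerCoeff μ ϑ ζ (n + k) * ((n + k).choose n)
  calc |a n| * (c * |x| ^ n * |x| ^ k) ≤ R ^ n * (c * |x| ^ n * |x| ^ k) := by
        gcongr; exact ha n
    _ = _ := by ring

lemma summable_abs_mul_fcpP (hμ : 0 < μ) (hμ1 : μ ≤ 1) (hϑ : 0 < ϑ) (hζ : 0 < ζ) {a : ℕ → ℝ}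
    {R : ℝ} (ha : ∀ n, |a n| ≤ R ^ n) (θ lam t : ℝ) :
    Summable fun n => |a n * fcpP μ ϑ ζ θ lam n t| := by
  simp_rw [fcpP_eq_tsum_fcpTerm hζ, ← tsum_mul_left]
  exact (summable_mul_fcpTerm hμ hμ1 hϑ hζ ha _).prod.abs

lemma tsum_mul_fcpP_eq (hμ : 0 < μ) (hμ1 : μ ≤ 1) (hϑ : 0 < ϑ) (hζ : 0 < ζ) {a : ℕ → ℝ}
    {R : ℝ} (ha : ∀ n, |a n| ≤ R ^ n) (θ lam t : ℝ) :
    ∑' n, a n * fcpP μ ϑ ζ θ lam n t = Gamma ϑ * ∑' m, mittagLefflerCoeff μ ϑ ζ m *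
      ∑ n ∈ range (m + 1), a n * (m.choose n * (lam * t ^ θ) ^ n * (-(lam * t ^ θ)) ^ (m - n)) := by
  have hF := summable_mul_fcpTerm hμ hμ1 hϑ hζ ha (lam * t ^ θ)
  simp_rw [fcpP_eq_tsum_fcpTerm hζ, ← tsum_mul_left]
  rw [← hF.tsum_prod, hF.tsum_eq_tsum_sum_antidiagonal]
  refine tsum_congr fun m => ?_
  rw [Nat.sum_antidiagonal_eq_sum_range_succ_mk, mul_sum, mul_sum]
  refine sum_congr rfl fun n hn => ?_
  rw [fcpTerm, Nat.add_sub_cancel' (mem_range_succ_iff.1 hn)]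
  ring

end FCP

lemma fcpP_eq_gamma_mul_mittagLeffler (μ ϑ ζ θ lam t : ℝ) (n : ℕ) :
    fcpP μ ϑ ζ θ lam n t = Gamma ϑ * risingFactorial ζ n * (lam * t ^ θ) ^ n / n.factorial *
      mittagLeffler μ (ϑ + μ * n) (ζ + n) (-(lam * t ^ θ)) := by
  rw [fcpP, mittagLeffler, mul_comm (risingFactorial ζ n) (Gamma ϑ)]
  congr 1
  refine tsum_congr fun k => ?_
  rw [show μ * ((n + k : ℕ) : ℝ) + ϑ = μ * k + (ϑ + μ * n) by push_cast; ring]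

lemma abs_sum_Icc_choose_mul_pow_le (k n : ℕ) (y z : ℝ) :
    |∑ j ∈ Icc k n, (n.choose j : ℝ) * y ^ j * z ^ (n - j)| ≤ (|y| + |z|) ^ n := by
  calc |∑ j ∈ Icc k n, (n.choose j : ℝ) * y ^ j * z ^ (n - j)|
      ≤ ∑ j ∈ Icc k n, |(n.choose j : ℝ) * y ^ j * z ^ (n - j)| := abs_sum_le_sum_abs _ _
    _ ≤ ∑ j ∈ range (n + 1), |(n.choose j : ℝ) * y ^ j * z ^ (n - j)| :=
        sum_le_sum_of_subset_of_nonneg (fun j hj => by simp only [mem_Icc, mem_range] at *; omega)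
          fun _ _ _ => abs_nonneg _
    _ = (|y| + |z|) ^ n := by
        rw [add_pow]
        refine sum_congr rfl fun j _ => ?_
        rw [abs_mul, abs_mul, abs_pow, abs_pow, Nat.abs_cast]
        ring

lemma binomial_thinning {j m : ℕ} (hjm : j ≤ m) (G x : ℝ) :
    ∑ n ∈ Icc j m,
        (n.choose j * G ^ j * (1 - G) ^ (n - j)) * (m.choose n * x ^ n * (-x) ^ (m - n))
      = m.choose j * (G * x) ^ j * (-(G * x)) ^ (m - j) := by
  rw [← Ico_add_one_right_eq_Icc, sum_Ico_eq_sum_range, show m + 1 - j = m - j + 1 by omega,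
    show -(G * x) = (1 - G) * x + -x by ring, add_pow, mul_sum]
  refine sum_congr rfl fun i hi => ?_
  have hi : i ≤ m - j := mem_range_succ_iff.1 hi
  have hchoose : (m.choose (j + i) * (j + i).choose j : ℝ) = m.choose j * (m - j).choose i := by
    have := Nat.choose_mul (n := m) (Nat.le_add_right j i)
    rw [Nat.add_sub_cancel_left] at this
    exact_mod_cast this
  rw [Nat.add_sub_cancel_left, show m - (j + i) = m - j - i by omega, pow_add, mul_pow, mul_pow]
  linear_combination (G ^ j * (1 - G) ^ i * x ^ j * x ^ i * (-x) ^ (m - j - i)) * hchoose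

lemma binomial_thinning_tail (k m : ℕ) (G x : ℝ) :
    ∑ n ∈ range (m + 1), (∑ j ∈ Icc k n, (n.choose j : ℝ) * G ^ j * (1 - G) ^ (n - j)) *
        (m.choose n * x ^ n * (-x) ^ (m - n))
      = ∑ j ∈ range (m + 1), (if k ≤ j then 1 else 0) *
          (m.choose j * (G * x) ^ j * (-(G * x)) ^ (m - j)) := by
  simp only [boole_mul, ← sum_filter, sum_mul]
  rw [show (range (m + 1)).filter (fun j => k ≤ j) = Icc k m by
    ext; simp only [mem_filter, mem_range, mem_Icc]; omega]
  rw [sum_comm' (t' := Icc k m) (s' := fun j => Icc j m)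
    (fun n j => by simp only [mem_range, mem_Icc]; omega)]
  exact sum_congr rfl fun j hj => binomial_thinning (mem_Icc.1 hj).2 G x

theorem fcp_binomial_thinning_general (μ ϑ ζ θ lam t G : ℝ) (hμ : 0 < μ) (hμ1 : μ ≤ 1)
    (hζ : 0 < ζ) (hϑ : μ * ζ ≤ ϑ) (k : ℕ) :
    (Summable fun n : ℕ =>
      |(∑ j ∈ Finset.Icc k n, (n.choose j : ℝ) * G ^ j * (1 - G) ^ (n - j)) *
        fcpP μ ϑ ζ θ lam n t|) ∧
    (Summable fun j : ℕ => |if k ≤ j then fcpP μ ϑ ζ θ (lam * G) j t else 0|) ∧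
    (Summable fun j : ℕ => |if k ≤ j then
        Real.Gamma ϑ * risingFactorial ζ j * (lam * G * t ^ θ) ^ j / j.factorial *
          mittagLeffler μ (ϑ + μ * j) (ζ + j) (-(lam * G * t ^ θ)) else 0|) ∧
    (∑' n : ℕ, (∑ j ∈ Finset.Icc k n, (n.choose j : ℝ) * G ^ j * (1 - G) ^ (n - j)) *
        fcpP μ ϑ ζ θ lam n t
      = ∑' j : ℕ, if k ≤ j then fcpP μ ϑ ζ θ (lam * G) j t else 0) ∧
    ((∑' j : ℕ, if k ≤ j then fcpP μ ϑ ζ θ (lam * G) j t else 0)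
      = ∑' j : ℕ, if k ≤ j then
          Real.Gamma ϑ * risingFactorial ζ j * (lam * G * t ^ θ) ^ j / j.factorial *
            mittagLeffler μ (ϑ + μ * j) (ζ + j) (-(lam * G * t ^ θ)) else 0) := by
  have hϑ0 : 0 < ϑ := (mul_pos hμ hζ).trans_le hϑ
  have htail (n : ℕ) := abs_sum_Icc_choose_mul_pow_le k n G (1 - G)
  have hind (n : ℕ) : |if k ≤ n then (1 : ℝ) else 0| ≤ 1 ^ n := by split_ifs <;> simp
  have hite (j : ℕ) : (if k ≤ j then fcpP μ ϑ ζ θ (lam * G) j t else 0) =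
      (if k ≤ j then 1 else 0) * fcpP μ ϑ ζ θ (lam * G) j t := (boole_mul _ _).symm
  simp only [← fcpP_eq_gamma_mul_mittagLeffler, hite, and_true]
  have hsummable := summable_abs_mul_fcpP hμ hμ1 hϑ0 hζ hind θ (lam * G) t
  refine ⟨summable_abs_mul_fcpP hμ hμ1 hϑ0 hζ htail θ lam t, hsummable, hsummable, ?_⟩
  rw [tsum_mul_fcpP_eq hμ hμ1 hϑ0 hζ htail, tsum_mul_fcpP_eq hμ hμ1 hϑ0 hζ hind,
    show lam * G * t ^ θ = G * (lam * t ^ θ) by ring]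
  simp only [binomial_thinning_tail]

/-- Binomial-thinning identity for the FCP underlying the order-statistics theorem:
`∑_{n≥k} (∑_{j=k}^n C(n,j) G^j (1−G)^{n−j}) P_λ(n,t) = ∑_{j≥k} P_{λG}(j,t)
 = ∑_{j≥k} Γ(ϑ) (ζ)_j (λGt^θ)^j/j! · E_{μ,ϑ+μj}^{ζ+j}(−λGt^θ)`,
all series converging absolutely. -/
theorem fcp_binomial_thinning (μ ϑ ζ θ lam t G : ℝ) (hμ : 0 < μ) (hμ1 : μ ≤ 1)
    (hζ : 0 < ζ) (hϑ : μ * ζ ≤ ϑ) (hθ : 0 < θ) (hθ1 : θ ≤ 1) (hlam : 0 < lam)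
    (ht : 0 < t) (hG0 : 0 ≤ G) (hG1 : G ≤ 1) (k : ℕ) (hk : 1 ≤ k) :
    (Summable fun n : ℕ =>
      |(∑ j ∈ Finset.Icc k n, (n.choose j : ℝ) * G ^ j * (1 - G) ^ (n - j)) *
        fcpP μ ϑ ζ θ lam n t|) ∧
    (Summable fun j : ℕ => |if k ≤ j then fcpP μ ϑ ζ θ (lam * G) j t else 0|) ∧
    (Summable fun j : ℕ => |if k ≤ j then
        Real.Gamma ϑ * risingFactorial ζ j * (lam * G * t ^ θ) ^ j / j.factorial *
          mittagLeffler μ (ϑ + μ * j) (ζ + j) (-(lam * G * t ^ θ)) else 0|) ∧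
    (∑' n : ℕ, (∑ j ∈ Finset.Icc k n, (n.choose j : ℝ) * G ^ j * (1 - G) ^ (n - j)) *
        fcpP μ ϑ ζ θ lam n t
      = ∑' j : ℕ, if k ≤ j then fcpP μ ϑ ζ θ (lam * G) j t else 0) ∧
    ((∑' j : ℕ, if k ≤ j then fcpP μ ϑ ζ θ (lam * G) j t else 0)
      = ∑' j : ℕ, if k ≤ j then
          Real.Gamma ϑ * risingFactorial ζ j * (lam * G * t ^ θ) ^ j / j.factorial *
            mittagLeffler μ (ϑ + μ * j) (ζ + j) (-(lam * G * t ^ θ)) else 0) :=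
  fcp_binomial_thinning_general μ ϑ ζ θ lam t G hμ hμ1 hζ hϑ k
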